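/- Define Γ: ∧^{2r} g → S^r(g) on decomposables by Γ(w₁∧⋯∧w_{2r}) = Σ_{ν∈Π_r} [w_{ν(1)},w_{ν(2)}]⋯[w_{ν(2r-1)},w_{ν(2r)}], summing over the (2r−1)!! perfect matchings of {1,…,2r} (with signs +1). Then for any x ∈ g and ζ ∈ ∧^{2r} g, Γ(ζ)(x) = ((−1)^r / r!)·((dx)^r, ζ), where ( , ) is the Killing-form pairing on ∧^{2r} g. -/

import Mathlib

/-!
Expanding `(dx)^r = 2^{-r} (∑ᵢ bᵢ ∧ [zᵢ, x])^r` writes it as a sum, over maps `f : Fin r → Fin n`,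
of decomposable `2r`-vectors, each of which pairs with `w₁ ∧ ⋯ ∧ w_{2r}` by a determinant.
Expanding the determinants and exchanging the sum over `f` with the sum over permutations `σ`,
the sum over `f` factors into a product over the `r` consecutive pairs `(2k, 2k+1)`, and each
factor contracts through the dual bases: `∑ᵢ B(bᵢ, u) B([zᵢ, x], v) = -B([u, v], x)` by
invariance of the Killing form. What is left is `(-1/2)^r` times the signed sum over all `σ`
that defines `Γ` up to the factor `1/(r! 2^r)`.
-/

open ExteriorAlgebra Module

/-- The value at `x` of `Γ(w₁ ∧ ⋯ ∧ w_{2r}) ∈ S^r(g)`, i.e.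
`∑_{ν ∈ Π_r} B([w_{ν 1}, w_{ν 2}], x) ⋯ B([w_{ν (2r-1)}, w_{ν (2r)}], x)`, the sum over
the `(2r-1)!!` perfect matchings of `{1, …, 2r}` (representatives with sign `+1`).
Since the summand `sg σ · ∏ᵢ B([w_{σ(2i-1)}, w_{σ(2i)}], x)` is constant on the
`r! 2^r`-element cosets of the stabilizer of the standard matching, this equals the
average `(1/(r! 2^r)) ∑_{σ ∈ Σ_{2r}} sg σ · ∏ᵢ B([w_{σ(2i-1)}, w_{σ(2i)}], x)`. -/
noncomputable def GammaVal {L : Type*} [LieRing L] [LieAlgebra ℂ L]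
    [Module.Finite ℂ L] (r : ℕ) (w : Fin (2 * r) → L) (x : L) : ℂ :=
  (1 / ((Nat.factorial r : ℂ) * 2 ^ r)) *
    ∑ σ : Equiv.Perm (Fin (2 * r)), ((Equiv.Perm.sign σ : ℤ) : ℂ) *
      ∏ i : Fin r,
        killingForm ℂ L
          ⁅w (σ ⟨2 * i.1, by have := i.isLt; omega⟩),
            w (σ ⟨2 * i.1 + 1, by have := i.isLt; omega⟩)⁆ x

theorem List.prod_ofFn_two_mul {M : Type*} [Monoid M] {m : ℕ} (g : Fin (2 * m) → M) :
    (List.ofFn g).prod =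
      (List.ofFn fun k : Fin m =>
        g ⟨2 * k, by have := k.isLt; omega⟩ * g ⟨2 * k + 1, by have := k.isLt; omega⟩).prod := by
  rw [List.ofFn_mul', List.prod_flatten, List.map_ofFn]
  simp [Function.comp_def, List.ofFn_succ]

theorem Fin.prod_univ_two_mul {M : Type*} [CommMonoid M] {m : ℕ} (g : Fin (2 * m) → M) :
    ∏ j, g j = ∏ k : Fin m,
      g ⟨2 * k, by have := k.isLt; omega⟩ * g ⟨2 * k + 1, by have := k.isLt; omega⟩ := by
  rw [← List.prod_ofFn, List.prod_ofFn_two_mul, List.prod_ofFn]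

theorem sum_pow_eq_sum_prod_ofFn {A κ : Type*} [Semiring A] [Fintype κ] (X : κ → A) (m : ℕ) :
    (∑ i, X i) ^ m = ∑ f : Fin m → κ, (List.ofFn fun k => X (f k)).prod := by
  induction m with
  | zero => simp
  | succ m ih =>
    rw [pow_succ', ih, Finset.sum_mul_sum, ← (Fin.consEquiv fun _ => κ).sum_comp,
      Fintype.sum_prod_type]
    simp [Fin.consEquiv, List.ofFn_succ]

section Interleave

variable {α : Type*} {m : ℕ}

def Fin.interleave (u v : Fin m → α) (j : Fin (2 * m)) : α :=
  if j.1 % 2 = 0 then u ⟨j / 2, by omega⟩ else v ⟨j / 2, by omega⟩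

@[simp]
theorem Fin.interleave_two_mul (u v : Fin m → α) (k : Fin m) (h : 2 * k.1 < 2 * m) :
    Fin.interleave u v ⟨2 * k, h⟩ = u k := by
  simp [Fin.interleave]

@[simp]
theorem Fin.interleave_two_mul_add_one (u v : Fin m → α) (k : Fin m) (h : 2 * k.1 + 1 < 2 * m) :
    Fin.interleave u v ⟨2 * k + 1, h⟩ = v k := by
  simp [Fin.interleave, Nat.add_mod, Nat.add_div]

end Interleave

theorem ExteriorAlgebra.ιMulti_interleave {R M : Type*} [CommRing R] [AddCommGroup M] [Module R M]
    {m : ℕ} (u v : Fin m → M) :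
    ιMulti R (2 * m) (Fin.interleave u v) = (List.ofFn fun k => ι R (u k) * ι R (v k)).prod := by
  rw [ιMulti_apply, List.prod_ofFn_two_mul]
  simp

theorem ExteriorAlgebra.bilinForm_pow_sum_ι_mul_ι_ιMulti {R M κ : Type*} [CommRing R]
    [AddCommGroup M] [Module R M] [Fintype κ] {m : ℕ} (B : LinearMap.BilinForm R M)
    (Φ : LinearMap.BilinForm R (ExteriorAlgebra R M))
    (hΦ : ∀ u v : Fin (2 * m) → M,
      Φ (ιMulti R _ u) (ιMulti R _ v) = (Matrix.of fun i j => B (u i) (v j)).det)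
    (a c : κ → M) (w : Fin (2 * m) → M) :
    Φ ((∑ i, ι R (a i) * ι R (c i)) ^ m) (ιMulti R (2 * m) w) =
      ∑ σ : Equiv.Perm (Fin (2 * m)), Equiv.Perm.sign σ • ∏ k : Fin m, ∑ i,
        B (a i) (w (σ ⟨2 * k, by have := k.isLt; omega⟩)) *
          B (c i) (w (σ ⟨2 * k + 1, by have := k.isLt; omega⟩)) := by
  simp_rw [sum_pow_eq_sum_prod_ofFn, ← ιMulti_interleave, map_sum, LinearMap.sum_apply, hΦ]
  -- transposing makes `σ` act on the indices of `w`, as in `Γ`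
  simp_rw [← Matrix.det_transpose (Matrix.of _), Matrix.det_apply]
  rw [Finset.sum_comm]
  refine Finset.sum_congr rfl fun σ _ => ?_
  rw [← Finset.smul_sum, Fintype.prod_sum]
  simp [Fin.prod_univ_two_mul]

theorem killingForm_dual_apply {K L ι : Type*} [Field K] [LieRing L] [LieAlgebra K L]
    [DecidableEq ι] (b : Basis ι K L) (z : ι → L)
    (hdual : ∀ i j, killingForm K L (b i) (z j) = if i = j then 1 else 0) (i : ι) (y : L) :
    killingForm K L (z i) y = b.repr y i := by
  have : killingForm K L (z i) = Finsupp.lapply i ∘ₗ b.repr.toLinearMap :=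
    b.ext fun j => by simp [LieModule.traceForm_comm K L L (z i), hdual, Finsupp.single_apply]
  exact LinearMap.congr_fun this y

theorem sum_killingForm_mul_killingForm_dual_lie {K L ι : Type*} [Field K] [LieRing L]
    [LieAlgebra K L] [Fintype ι] [DecidableEq ι] (b : Basis ι K L) (z : ι → L)
    (hdual : ∀ i j, killingForm K L (b i) (z j) = if i = j then 1 else 0) (x u v : L) :
    ∑ i, killingForm K L (b i) u * killingForm K L ⁅z i, x⁆ v = -killingForm K L ⁅u, v⁆ x := by
  calc ∑ i, killingForm K L (b i) u * killingForm K L ⁅z i, x⁆ v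
      = ∑ i, b.repr ⁅x, v⁆ i • killingForm K L (b i) u := by
        simp_rw [LieModule.traceForm_apply_lie_apply, killingForm_dual_apply b z hdual, smul_eq_mul,
          mul_comm]
    _ = killingForm K L ⁅x, v⁆ u := by
        conv_rhs => rw [← b.sum_repr ⁅x, v⁆]
        simp only [map_sum, map_smul, LinearMap.sum_apply, LinearMap.smul_apply]
    _ = -killingForm K L ⁅u, v⁆ x := by
        rw [LieModule.traceForm_apply_lie_apply, LieModule.traceForm_comm, ← lie_skew, map_neg,
          LinearMap.neg_apply]

theorem stmt16_general (L : Type*) [LieRing L] [LieAlgebra ℂ L] [FiniteDimensional ℂ L]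
    (n r : ℕ)
    (b : Basis (Fin n) ℂ L) (z : Fin n → L)
    (hdual : ∀ i j, killingForm ℂ L (b i) (z j) = if i = j then 1 else 0)
    (D : L → ExteriorAlgebra ℂ L)
    (hD : ∀ x : L, D x = (1/2 : ℂ) • ∑ i, ι ℂ (b i) * ι ℂ ⁅z i, x⁆)
    (Φ : LinearMap.BilinForm ℂ (ExteriorAlgebra ℂ L))
    (hdet : ∀ (k : ℕ) (u v : Fin k → L),
      Φ (ιMulti ℂ k u) (ιMulti ℂ k v) =
        (Matrix.of fun i j => killingForm ℂ L (u i) (v j)).det) :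
    ∀ (x : L) (w : Fin (2 * r) → L),
      GammaVal r w x =
        ((-1 : ℂ) ^ r / (Nat.factorial r : ℂ)) * Φ ((D x) ^ r) (ιMulti ℂ (2 * r) w) := by
  intro x w
  rw [hD, smul_pow, map_smul, LinearMap.smul_apply,
    bilinForm_pow_sum_ι_mul_ι_ιMulti (killingForm ℂ L) Φ (hdet _)]
  simp_rw [sum_killingForm_mul_killingForm_dual_lie b z hdual, Finset.prod_neg]
  rw [GammaVal]
  simp only [Finset.card_univ, Fintype.card_fin, Units.smul_def, zsmul_eq_mul]
  simp_rw [smul_eq_mul, mul_left_comm _ ((-1 : ℂ) ^ r), ← Finset.mul_sum, ← mul_assoc]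
  congr 1
  have hsq : (-1 : ℂ) ^ r * (-1) ^ r = 1 := by rw [← mul_pow]; norm_num
  rw [div_pow, one_pow]
  linear_combination -1 / ((r.factorial : ℂ) * 2 ^ r) * hsq

/-- Let `Γ : ⋀^{2r} g → S^r(g)` be given on decomposables by summing the products of
`[w_{ν(2i-1)}, w_{ν(2i)}]` over perfect matchings `ν`.  Then for any `x ∈ g` and any
decomposable `ζ = w₁ ∧ ⋯ ∧ w_{2r} ∈ ⋀^{2r} g`,
`Γ(ζ)(x) = ((-1)^r / r!) · ((dx)^r, ζ)`, where `( , )` is the extension `Φ` of the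
Killing form `B` to `⋀ g` and `dx = (1/2) ∑ᵢ wᵢ ∧ [zᵢ, x]` (Killing-dual bases). -/
theorem stmt16 (L : Type*) [LieRing L] [LieAlgebra ℂ L] [FiniteDimensional ℂ L]
    [LieAlgebra.IsSemisimple ℂ L]
    (H : LieSubalgebra ℂ L) [H.IsCartanSubalgebra]
    (n r : ℕ) (hn : finrank ℂ L = n) (hnr : n = finrank ℂ H + 2 * r)
    (b : Basis (Fin n) ℂ L) (z : Fin n → L)
    (hdual : ∀ i j, killingForm ℂ L (b i) (z j) = if i = j then 1 else 0)
    (D : L → ExteriorAlgebra ℂ L)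
    (hD : ∀ x : L, D x = (1/2 : ℂ) • ∑ i, ι ℂ (b i) * ι ℂ ⁅z i, x⁆)
    (Φ : LinearMap.BilinForm ℂ (ExteriorAlgebra ℂ L))
    (hdet : ∀ (k : ℕ) (u v : Fin k → L),
      Φ (ιMulti ℂ k u) (ιMulti ℂ k v) =
        (Matrix.of fun i j => killingForm ℂ L (u i) (v j)).det)
    (horth : ∀ (k m : ℕ), k ≠ m → ∀ (u : Fin k → L) (v : Fin m → L),
      Φ (ιMulti ℂ k u) (ιMulti ℂ m v) = 0) :
    ∀ (x : L) (w : Fin (2 * r) → L),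
      GammaVal r w x =
        ((-1 : ℂ) ^ r / (Nat.factorial r : ℂ)) * Φ ((D x) ^ r) (ιMulti ℂ (2 * r) w) :=
  stmt16_general L n r b z hdual D hD Φ hdet
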